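/- Let D_λ = diag(λ₁,…,λ_d) with all λ_j > 0, let D_{1/λ} = diag(1/λ₁,…,1/λ_d), and let R be a real d×d matrix satisfying R D_λ = -D_λ Rᵀ. For smooth functions φ on ℝ^d define L⁰φ(x) = (1/2)Δφ(x) - (1/2)⟨D_{1/λ}x, ∇φ(x)⟩ and ℛφ(x) = ⟨Rx, ∇φ(x)⟩. Then the following are equivalent: (a) L⁰(ℛφ) = ℛ(L⁰φ) for every Schwartz function φ; (b) R + Rᵀ = 0; (c) R D_λ = D_λ R. -/

import Mathlib

open MeasureTheory Matrix

noncomputable section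

/-- The partial derivative `∂_i φ`. -/
def pd {d : ℕ} (i : Fin d) (φ : (Fin d → ℝ) → ℝ) : (Fin d → ℝ) → ℝ :=
  fun x => fderiv ℝ φ x (Pi.single i 1)

/-- The Laplacian `Δφ = ∑ i ∂_i² φ`. -/
def lap {d : ℕ} (φ : (Fin d → ℝ) → ℝ) (x : Fin d → ℝ) : ℝ :=
  ∑ i, pd i (pd i φ) x

/-- `L⁰φ(x) = (1/2)Δφ(x) - (1/2)⟨D_{1/λ} x, ∇φ(x)⟩` with `D_{1/λ} = diag(1/λ₁,…,1/λ_d)`. -/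
def Lsym {d : ℕ} (lam : Fin d → ℝ) (φ : (Fin d → ℝ) → ℝ) (x : Fin d → ℝ) : ℝ :=
  (1 / 2) * lap φ x - (1 / 2) * ∑ i, (1 / lam i) * x i * pd i φ x

/-- `ℛφ(x) = ⟨Rx, ∇φ(x)⟩`. -/
def Rop {d : ℕ} (R : Matrix (Fin d) (Fin d) ℝ) (φ : (Fin d → ℝ) → ℝ) (x : Fin d → ℝ) : ℝ :=
  ∑ i, R.mulVec x i * pd i φ x

end

/-!
The drift part `A φ = ⟨D_{1/λ} x, ∇φ⟩` of `L⁰` and `ℛ` are both derivatives along linear vector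
fields, so by the symmetry of second derivatives `[A, ℛ]` is again one, along
`(R D_{1/λ} - D_{1/λ} R) x`, while `[Δ, ℛ] φ = 2 ∑ R_ji ∂_i ∂_j φ`. Hence
`[L⁰, ℛ] φ = ∑ R_ji ∂_i ∂_j φ - ½ ⟨(R D_{1/λ} - D_{1/λ} R) x, ∇φ⟩`.
If `R` is skew and commutes with `D_λ`, both terms vanish. Conversely, at `x = 0` only the first
term survives, and a Schwartz function equal to `x_k x_l` near `0` turns it into `R_kl + R_lk`.
Under `R D_λ = -D_λ Rᵀ` we have `D_λ (R + Rᵀ) = D_λ R - R D_λ`, which gives (b) ⇔ (c).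
-/

open scoped ContDiff

section PartialDerivatives

variable {d : ℕ} {f g φ : (Fin d → ℝ) → ℝ} {x : Fin d → ℝ} {i j : Fin d}

theorem pd_add (hf : DifferentiableAt ℝ f x) (hg : DifferentiableAt ℝ g x) :
    pd i (fun y => f y + g y) x = pd i f x + pd i g x := by
  simp [pd, fderiv_fun_add hf hg]

theorem pd_sub (hf : DifferentiableAt ℝ f x) (hg : DifferentiableAt ℝ g x) :
    pd i (fun y => f y - g y) x = pd i f x - pd i g x := by
  simp [pd, fderiv_fun_sub hf hg]

theorem pd_const_mul (c : ℝ) (hf : DifferentiableAt ℝ f x) :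
    pd i (fun y => c * f y) x = c * pd i f x := by
  simp [pd, fderiv_const_mul hf c]

theorem pd_mul (hf : DifferentiableAt ℝ f x) (hg : DifferentiableAt ℝ g x) :
    pd i (fun y => f y * g y) x = pd i f x * g x + f x * pd i g x := by
  simp only [pd, fderiv_fun_mul hf hg, _root_.add_apply, _root_.smul_apply, smul_eq_mul]
  ring

theorem pd_sum {ι : Type*} {s : Finset ι} {f : ι → (Fin d → ℝ) → ℝ}
    (hf : ∀ k ∈ s, DifferentiableAt ℝ (f k) x) :
    pd i (fun y => ∑ k ∈ s, f k y) x = ∑ k ∈ s, pd i (f k) x := by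
  simp [pd, fderiv_fun_sum hf]

theorem Filter.EventuallyEq.pd (h : f =ᶠ[nhds x] g) : pd i f =ᶠ[nhds x] pd i g := by
  filter_upwards [h.fderiv (𝕜 := ℝ)] with y hy
  simp only [_root_.pd, hy]

theorem contDiff_mulVec_apply (M : Matrix (Fin d) (Fin d) ℝ) (j : Fin d) :
    ContDiff ℝ ∞ (fun y : Fin d → ℝ => (M *ᵥ y) j) := by
  simp only [mulVec, dotProduct]
  fun_prop

theorem pd_mulVec_apply (M : Matrix (Fin d) (Fin d) ℝ) (j : Fin d) :
    pd i (fun y => (M *ᵥ y) j) x = M j i := by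
  have hlin : (fun y => (M *ᵥ y) j) =
      (ContinuousLinearMap.proj j).comp (LinearMap.toContinuousLinearMap (mulVecLin M)) := rfl
  rw [pd, hlin, ContinuousLinearMap.fderiv]
  simp

theorem pd_apply (k : Fin d) : pd i (fun y => y k) x = (Pi.single i 1 : Fin d → ℝ) k := by
  have hlin : (fun y : Fin d → ℝ => y k) = ContinuousLinearMap.proj (R := ℝ) (φ := fun _ => ℝ) k :=
    rfl
  rw [pd, hlin, ContinuousLinearMap.fderiv]
  rfl

theorem pd_pd_mul_apply (k l : Fin d) :
    pd i (pd j (fun y => y k * y l)) x =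
      (Pi.single j 1 : Fin d → ℝ) k * (Pi.single i 1 : Fin d → ℝ) l +
        (Pi.single i 1 : Fin d → ℝ) k * (Pi.single j 1 : Fin d → ℝ) l := by
  have hcoord : ∀ m : Fin d, Differentiable ℝ fun y : Fin d → ℝ => y m :=
    fun m => differentiable_apply m
  have hpd : pd j (fun y => y k * y l) =
      fun y => (Pi.single j 1 : Fin d → ℝ) k * y l + (Pi.single j 1 : Fin d → ℝ) l * y k := by
    ext y
    rw [pd_mul (hcoord k y) (hcoord l y), pd_apply, pd_apply]
    ring
  rw [hpd, pd_add ((hcoord l x).const_mul _) ((hcoord k x).const_mul _),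
    pd_const_mul _ (hcoord l x), pd_const_mul _ (hcoord k x), pd_apply, pd_apply]
  ring

theorem ContDiff.pd (hφ : ContDiff ℝ ∞ φ) (i : Fin d) : ContDiff ℝ ∞ (pd i φ) :=
  (hφ.fderiv_right (m := ∞) le_rfl).clm_apply contDiff_const

theorem pd_comm (hφ : ContDiff ℝ 2 φ) (i j : Fin d) (x : Fin d → ℝ) :
    pd i (pd j φ) x = pd j (pd i φ) x := by
  have hsymm := hφ.contDiffAt.isSymmSndFDerivAt (x := x) (by simp)
  have key : ∀ a b : Fin d, pd a (pd b φ) x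
      = fderiv ℝ (fderiv ℝ φ) x (Pi.single a 1) (Pi.single b 1) := by
    intro a b
    unfold pd
    rw [fderiv_clm_apply _ (differentiableAt_const _)]
    · simp
    · exact (hφ.fderiv_right (m := 1) le_rfl).differentiable one_ne_zero x
  rw [key, key, hsymm]

end PartialDerivatives

section Operators

variable {d : ℕ} {φ : (Fin d → ℝ) → ℝ} {x : Fin d → ℝ} {M : Matrix (Fin d) (Fin d) ℝ}

theorem ContDiff.Rop (hφ : ContDiff ℝ ∞ φ) (M : Matrix (Fin d) (Fin d) ℝ) :
    ContDiff ℝ ∞ (Rop M φ) :=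
  ContDiff.sum fun j _ => (contDiff_mulVec_apply M j).mul (hφ.pd j)

theorem ContDiff.lap (hφ : ContDiff ℝ ∞ φ) : ContDiff ℝ ∞ (lap φ) :=
  ContDiff.sum fun i _ => (hφ.pd i).pd i

theorem Rop_apply_zero (M : Matrix (Fin d) (Fin d) ℝ) (φ : (Fin d → ℝ) → ℝ) :
    Rop M φ 0 = 0 := by
  simp [Rop]

theorem Rop_sub_left (M N : Matrix (Fin d) (Fin d) ℝ) (φ : (Fin d → ℝ) → ℝ) (x : Fin d → ℝ) :
    Rop (M - N) φ x = Rop M φ x - Rop N φ x := by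
  simp [Rop, sub_mulVec, sub_mul]

theorem Lsym_eq_lap_sub_Rop (lam : Fin d → ℝ) (φ : (Fin d → ℝ) → ℝ) (x : Fin d → ℝ) :
    Lsym lam φ x = (1 / 2) * (lap φ x - Rop (diagonal lam⁻¹) φ x) := by
  simp only [Lsym, Rop, mulVec_diagonal, Pi.inv_apply, one_div]
  ring

theorem pd_Rop (hφ : ContDiff ℝ ∞ φ) (i : Fin d) (x : Fin d → ℝ) :
    pd i (Rop M φ) x = Rop M (pd i φ) x + ∑ j, M j i * pd j φ x := by
  have hdiff : ∀ j, DifferentiableAt ℝ (fun y => (M *ᵥ y) j) x :=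
    fun j => (contDiff_mulVec_apply M j).differentiable (by simp) x
  have hRop : Rop M φ = fun y => ∑ j, (M *ᵥ y) j * pd j φ y := rfl
  rw [hRop, pd_sum (f := fun j y => (M *ᵥ y) j * pd j φ y)
    fun j _ => (hdiff j).mul ((hφ.pd j).differentiable (by simp) x), Rop,
    ← Finset.sum_add_distrib]
  refine Finset.sum_congr rfl fun j _ => ?_
  rw [pd_mul (hdiff j) ((hφ.pd j).differentiable (by simp) x), pd_mulVec_apply,
    pd_comm (hφ.of_le (by decide)) i j x]
  ring

theorem Rop_Rop (hφ : ContDiff ℝ ∞ φ) (M N : Matrix (Fin d) (Fin d) ℝ) (x : Fin d → ℝ) :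
    Rop M (Rop N φ) x =
      ∑ i, ∑ j, (M *ᵥ x) i * (N *ᵥ x) j * pd j (pd i φ) x + Rop (N * M) φ x := by
  have hfirst : Rop M (Rop N φ) x =
      ∑ i, (M *ᵥ x) i * (Rop N (pd i φ) x + ∑ j, N j i * pd j φ x) :=
    Finset.sum_congr rfl fun i _ => by rw [pd_Rop hφ]
  have hlower : ∑ i, (M *ᵥ x) i * ∑ j, N j i * pd j φ x = Rop (N * M) φ x := by
    simp only [Rop, ← mulVec_mulVec, Finset.mul_sum]
    rw [Finset.sum_comm]
    refine Finset.sum_congr rfl fun j _ => ?_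
    rw [show (N *ᵥ M *ᵥ x) j = ∑ i, N j i * (M *ᵥ x) i from rfl, Finset.sum_mul]
    exact Finset.sum_congr rfl fun i _ => by ring
  rw [hfirst, ← hlower, ← Finset.sum_add_distrib]
  refine Finset.sum_congr rfl fun i _ => ?_
  simp only [Rop, mul_add, Finset.mul_sum, mul_assoc]

theorem Rop_Rop_sub_Rop_Rop (hφ : ContDiff ℝ ∞ φ) (M N : Matrix (Fin d) (Fin d) ℝ)
    (x : Fin d → ℝ) :
    Rop M (Rop N φ) x - Rop N (Rop M φ) x = Rop (N * M - M * N) φ x := by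
  have hsymm : ∑ i, ∑ j, (N *ᵥ x) i * (M *ᵥ x) j * pd j (pd i φ) x =
      ∑ i, ∑ j, (M *ᵥ x) i * (N *ᵥ x) j * pd j (pd i φ) x := by
    rw [Finset.sum_comm]
    refine Finset.sum_congr rfl fun i _ => Finset.sum_congr rfl fun j _ => ?_
    rw [pd_comm (hφ.of_le (by decide))]
    ring
  rw [Rop_Rop hφ, Rop_Rop hφ, hsymm, Rop_sub_left]
  ring

theorem Rop_lap (hφ : ContDiff ℝ ∞ φ) (M : Matrix (Fin d) (Fin d) ℝ) (x : Fin d → ℝ) :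
    Rop M (lap φ) x = ∑ i, Rop M (pd i (pd i φ)) x := by
  have hlap : lap φ = fun y => ∑ i, pd i (pd i φ) y := rfl
  simp only [Rop, hlap]
  rw [Finset.sum_comm]
  refine Finset.sum_congr rfl fun j _ => ?_
  rw [pd_sum fun i _ => ((hφ.pd i).pd i).differentiable (by simp) x, Finset.mul_sum]

theorem lap_Rop (hφ : ContDiff ℝ ∞ φ) (M : Matrix (Fin d) (Fin d) ℝ) (x : Fin d → ℝ) :
    lap (Rop M φ) x = Rop M (lap φ) x + 2 * ∑ i, ∑ j, M j i * pd i (pd j φ) x := by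
  have hpd : ∀ i, pd i (Rop M φ) = fun y => Rop M (pd i φ) y + ∑ j, M j i * pd j φ y :=
    fun i => funext (pd_Rop hφ i)
  have hsecond : ∀ i, pd i (pd i (Rop M φ)) x =
      Rop M (pd i (pd i φ)) x + 2 * ∑ j, M j i * pd i (pd j φ) x := by
    intro i
    have hdiff : ∀ j, DifferentiableAt ℝ (pd j φ) x :=
      fun j => (hφ.pd j).differentiable (by simp) x
    rw [hpd, pd_add (g := fun y => ∑ j, M j i * pd j φ y)
        (((hφ.pd i).Rop M).differentiable (by simp) x)
        (DifferentiableAt.fun_sum fun j _ => (hdiff j).const_mul _),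
      pd_Rop (hφ.pd i), pd_sum (f := fun j y => M j i * pd j φ y)
        fun j _ => (hdiff j).const_mul _]
    simp only [pd_const_mul _ (hdiff _), pd_comm (hφ.of_le (by decide)) i]
    ring
  rw [lap, Finset.sum_congr rfl fun i _ => hsecond i, Finset.sum_add_distrib, Rop_lap hφ,
    Finset.mul_sum]

theorem Rop_const_mul {f : (Fin d → ℝ) → ℝ} (c : ℝ) (hf : Differentiable ℝ f) :
    Rop M (fun y => c * f y) x = c * Rop M f x := by
  simp only [Rop, pd_const_mul c (hf x), Finset.mul_sum]
  exact Finset.sum_congr rfl fun j _ => by ring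

theorem Rop_fun_sub {f g : (Fin d → ℝ) → ℝ} (hf : Differentiable ℝ f) (hg : Differentiable ℝ g) :
    Rop M (fun y => f y - g y) x = Rop M f x - Rop M g x := by
  simp only [Rop, pd_sub (hf x) (hg x), mul_sub, Finset.sum_sub_distrib]

theorem Rop_Lsym (hφ : ContDiff ℝ ∞ φ) (M : Matrix (Fin d) (Fin d) ℝ) (lam : Fin d → ℝ)
    (x : Fin d → ℝ) :
    Rop M (Lsym lam φ) x =
      (1 / 2) * (Rop M (lap φ) x - Rop M (Rop (diagonal lam⁻¹) φ) x) := by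
  have hlap := hφ.lap.differentiable (by simp)
  have hRop := (hφ.Rop (diagonal lam⁻¹)).differentiable (by simp)
  rw [show Lsym lam φ = _ from funext (Lsym_eq_lap_sub_Rop lam φ),
    Rop_const_mul _ (hlap.fun_sub hRop), Rop_fun_sub hlap hRop]

theorem Lsym_Rop_sub_Rop_Lsym (hφ : ContDiff ℝ ∞ φ) (M : Matrix (Fin d) (Fin d) ℝ)
    (lam : Fin d → ℝ) (x : Fin d → ℝ) :
    Lsym lam (Rop M φ) x - Rop M (Lsym lam φ) x =
      ∑ i, ∑ j, M j i * pd i (pd j φ) x -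
        (1 / 2) * Rop (M * diagonal lam⁻¹ - diagonal lam⁻¹ * M) φ x := by
  rw [Rop_Lsym hφ, Lsym_eq_lap_sub_Rop, lap_Rop hφ, ← Rop_Rop_sub_Rop_Rop hφ]
  ring

end Operators

theorem sum_mul_pd_pd_eq_zero {d : ℕ} {φ : (Fin d → ℝ) → ℝ} {M : Matrix (Fin d) (Fin d) ℝ}
    (hM : M + Mᵀ = 0) (hφ : ContDiff ℝ 2 φ) (x : Fin d → ℝ) :
    ∑ i, ∑ j, M j i * pd i (pd j φ) x = 0 := by
  have hswap : ∑ i, ∑ j, M j i * pd i (pd j φ) x = ∑ i, ∑ j, M i j * pd i (pd j φ) x := by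
    rw [Finset.sum_comm]
    exact Finset.sum_congr rfl fun i _ => Finset.sum_congr rfl fun j _ => by rw [pd_comm hφ]
  have hanti : ∑ i, ∑ j, M i j * pd i (pd j φ) x = -∑ i, ∑ j, M j i * pd i (pd j φ) x := by
    simp only [← Finset.sum_neg_distrib]
    refine Finset.sum_congr rfl fun i _ => Finset.sum_congr rfl fun j _ => ?_
    rw [eq_neg_of_add_eq_zero_left (by simpa using congr_fun₂ hM i j : M i j + M j i = 0)]
    ring
  linarith

section DiagonalMatrices

variable {n K : Type*} [Fintype n] [DecidableEq n] [Field K] {A : Matrix n n K} {v : n → K}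

theorem mul_diagonal_inv_comm (h : A * diagonal v = diagonal v * A) :
    A * diagonal v⁻¹ = diagonal v⁻¹ * A := by
  ext i j
  have hij : A i j * (v j - v i) = 0 := by
    have := congr_fun₂ h i j
    simp only [mul_diagonal, diagonal_mul] at this
    linear_combination this
  simp only [mul_diagonal, diagonal_mul, Pi.inv_apply]
  rcases mul_eq_zero.mp hij with hA | hv
  · simp [hA]
  · rw [sub_eq_zero.mp hv, mul_comm]

theorem add_transpose_eq_zero_iff_mul_diagonal_comm (hv : ∀ i, v i ≠ 0)
    (hA : A * diagonal v = -(diagonal v * Aᵀ)) :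
    A + Aᵀ = 0 ↔ A * diagonal v = diagonal v * A := by
  constructor
  · intro h
    rw [hA, eq_neg_of_add_eq_zero_right h, mul_neg, neg_neg]
  · intro h
    have hzero : diagonal v * (A + Aᵀ) = 0 := by
      rw [mul_add, ← h, hA, neg_add_cancel]
    ext i j
    have := congr_fun₂ hzero i j
    simp only [diagonal_mul, Matrix.zero_apply] at this ⊢
    exact (mul_eq_zero.mp this).resolve_left (hv i)

end DiagonalMatrices

open scoped SchwartzMap in
theorem exists_schwartzMap_eventuallyEq {E F : Type*} [NormedAddCommGroup E] [NormedSpace ℝ E]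
    [FiniteDimensional ℝ E] [NormedAddCommGroup F] [NormedSpace ℝ F] {f : E → F}
    (hf : ContDiff ℝ ∞ f) (x₀ : E) : ∃ φ : 𝓢(E, F), ⇑φ =ᶠ[nhds x₀] f := by
  let b : ContDiffBump x₀ := ⟨1, 2, one_pos, one_lt_two⟩
  refine ⟨(b.hasCompactSupport.smul_right (f' := f)).toSchwartzMap (b.contDiff.smul hf), ?_⟩
  filter_upwards [b.eventuallyEq_one] with x hx
  simp [hx]

section Commutator

variable {d : ℕ} {lam : Fin d → ℝ} {R : Matrix (Fin d) (Fin d) ℝ}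

theorem add_transpose_eq_zero_of_Lsym_Rop_comm
    (h : ∀ φ : SchwartzMap (Fin d → ℝ) ℝ, Lsym lam (Rop R φ) 0 = Rop R (Lsym lam φ) 0) :
    R + Rᵀ = 0 := by
  ext k l
  obtain ⟨φ, hφ⟩ := exists_schwartzMap_eventuallyEq
    (f := fun y : Fin d → ℝ => y k * y l) (by fun_prop) 0
  have hcomm := Lsym_Rop_sub_Rop_Lsym (φ.smooth ⊤) R lam 0
  rw [h φ, sub_self, Rop_apply_zero, mul_zero, sub_zero] at hcomm
  have hpd : ∀ i j, pd i (pd j φ) 0 = pd i (pd j fun y => y k * y l) 0 :=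
    fun i j => hφ.pd.pd.eq_of_nhds
  simp only [hpd, pd_pd_mul_apply, Pi.single_apply, mul_ite, mul_one, mul_zero, mul_add,
    Finset.sum_add_distrib, Finset.sum_ite_irrel, Finset.sum_ite_eq, Finset.mem_univ, ↓reduceIte,
    Finset.sum_const_zero] at hcomm
  simp only [Matrix.add_apply, transpose_apply, Matrix.zero_apply]
  linarith

theorem Lsym_Rop_eq_Rop_Lsym {φ : (Fin d → ℝ) → ℝ} (hskew : R + Rᵀ = 0)
    (hcomm : R * diagonal lam = diagonal lam * R) (hφ : ContDiff ℝ ∞ φ) (x : Fin d → ℝ) :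
    Lsym lam (Rop R φ) x = Rop R (Lsym lam φ) x := by
  rw [← sub_eq_zero, Lsym_Rop_sub_Rop_Lsym hφ,
    sum_mul_pd_pd_eq_zero hskew (hφ.of_le (by decide)), mul_diagonal_inv_comm hcomm, sub_self]
  simp [Rop]

end Commutator

theorem normality_equivalences_general (d : ℕ)
    (lam : Fin d → ℝ) (hlam : ∀ j, 0 < lam j)
    (R : Matrix (Fin d) (Fin d) ℝ)
    (hR : R * Matrix.diagonal lam = -(Matrix.diagonal lam * Rᵀ)) :
    ((∀ φ : SchwartzMap (Fin d → ℝ) ℝ, ∀ x : Fin d → ℝ,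
        Lsym lam (Rop R ⇑φ) x = Rop R (Lsym lam ⇑φ) x) ↔ R + Rᵀ = 0) ∧
      (R + Rᵀ = 0 ↔ R * Matrix.diagonal lam = Matrix.diagonal lam * R) := by
  have hbc := add_transpose_eq_zero_iff_mul_diagonal_comm (fun j => (hlam j).ne') hR
  exact ⟨⟨fun ha => add_transpose_eq_zero_of_Lsym_Rop_comm fun φ => ha φ 0,
    fun hb φ x => Lsym_Rop_eq_Rop_Lsym hb (hbc.mp hb) (φ.smooth ⊤) x⟩, hbc⟩

/-- Let `D_λ = diag(λ₁,…,λ_d)` with all `λ_j > 0` and let `R` be a real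
`d×d` matrix with `R D_λ = -D_λ Rᵀ`. Then the following are equivalent:
(a) `L⁰(ℛφ) = ℛ(L⁰φ)` for every Schwartz function `φ`; (b) `R + Rᵀ = 0`;
(c) `R D_λ = D_λ R`. -/
theorem normality_equivalences (d : ℕ) (hd : 1 ≤ d)
    (lam : Fin d → ℝ) (hlam : ∀ j, 0 < lam j)
    (R : Matrix (Fin d) (Fin d) ℝ)
    (hR : R * Matrix.diagonal lam = -(Matrix.diagonal lam * Rᵀ)) :
    ((∀ φ : SchwartzMap (Fin d → ℝ) ℝ, ∀ x : Fin d → ℝ,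
        Lsym lam (Rop R ⇑φ) x = Rop R (Lsym lam ⇑φ) x) ↔ R + Rᵀ = 0) ∧
      (R + Rᵀ = 0 ↔ R * Matrix.diagonal lam = Matrix.diagonal lam * R) :=
  normality_equivalences_general d lam hlam R hR
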